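/- arXiv:0908.0313 — 5 statements merged into one kernel-verified Lean document; each statement's English description precedes it below -/
import Mathlib

section
/- With notation as above (K of characteristic zero containing nonzero elements √x, y; A = [[√x·D,0],[0,-√x·D]] with D = diag(1,...,n); C = [[0,I_n],[y·I_n,0]]; standard symplectic form B on K^{2n}): the subspace spanned by the matrices A and y·C generates, as a subalgebra-module, no nonzero proper totally isotropic subspace. Precisely, every nonzero subspace V ⊆ K^{2n} invariant under both A and C and totally isotropic for B must be zero. -/
open Matrix

noncomputable section

/-- The standard symplectic form matrix `J = [[0, -I_n],[I_n, 0]]`. -/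
def Jmat (K : Type*) [Field K] (n : ℕ) : Matrix (Fin n ⊕ Fin n) (Fin n ⊕ Fin n) K :=
  fromBlocks 0 (-1) 1 0

/-- The symplectic form `B(v, w) = vᵀ J w` on `K^{2n}`. -/
def sympForm (K : Type*) [Field K] (n : ℕ) (v w : Fin n ⊕ Fin n → K) : K :=
  v ⬝ᵥ (Jmat K n).mulVec w

/-- `D = diag(1, 2, …, n)`. -/
def Dmat (K : Type*) [Field K] (n : ℕ) : Matrix (Fin n) (Fin n) K :=
  diagonal fun i => ((i : ℕ) + 1 : K)

/-- `A = [[√x·D, 0], [0, -√x·D]]`. -/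
def Amat (K : Type*) [Field K] (n : ℕ) (s : K) : Matrix (Fin n ⊕ Fin n) (Fin n ⊕ Fin n) K :=
  fromBlocks (s • Dmat K n) 0 0 (-(s • Dmat K n))

/-- `C = [[0, I_n], [y·I_n, 0]]`. -/
def Cmat (K : Type*) [Field K] (n : ℕ) (y : K) : Matrix (Fin n ⊕ Fin n) (Fin n ⊕ Fin n) K :=
  fromBlocks 0 1 (y • 1) 0

/-! `A` is diagonal with eigenvalues `±s·k`, pairwise distinct in characteristic zero. Applying
to `v ∈ V` the Lagrange interpolation polynomial of `A` that is `1` at the eigenvalue of index `j`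
and `0` at all others isolates the coordinate `v_j`, so an `A`-invariant `V` contains every basis
vector `e_j` with `v_j ≠ 0`. But `B(e_j, C e_j)` is `-y` or `1`, never zero, so `V` cannot also be
`C`-invariant and totally isotropic unless it is zero. -/

open Polynomial

theorem Matrix.aeval_diagonal {K m : Type*} [Field K] [Fintype m] [DecidableEq m] (d : m → K)
    (q : K[X]) :
    aeval (diagonal d) q = diagonal fun i => q.eval (d i) := by
  rw [← diagonalAlgHom_apply (R := K), aeval_algHom_apply, diagonalAlgHom_apply, aeval_pi_apply]
  rfl

theorem single_mem_of_diagonal_mulVec_mem {K m : Type*} [Field K] [Fintype m] [DecidableEq m]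
    {d : m → K} (hd : Function.Injective d) {V : Submodule K (m → K)}
    (hV : ∀ v ∈ V, diagonal d *ᵥ v ∈ V) {v : m → K} (hv : v ∈ V) {j : m} (hj : v j ≠ 0) :
    Pi.single j 1 ∈ V := by
  set q := Lagrange.basis Finset.univ d j
  have hqv : aeval (diagonal d) q *ᵥ v = v j • Pi.single j 1 := by
    ext i
    rw [aeval_diagonal, mulVec_diagonal]
    rcases eq_or_ne i j with rfl | hij
    · simp [q, Lagrange.eval_basis_self hd.injOn]
    · simp [q, Lagrange.eval_basis_of_ne hij.symm, hij]
  have hqvV : aeval (diagonal d) q *ᵥ v ∈ V := by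
    have := aeval_apply_smul_mem_of_le_comap hv q (toLinAlgEquiv' (diagonal d)) hV
    rwa [aeval_algHom_apply, toLinAlgEquiv'_apply] at this
  rw [hqv] at hqvV
  simpa [hj] using V.smul_mem (v j)⁻¹ hqvV

def Adiag (K : Type*) [Field K] (n : ℕ) (s : K) : Fin n ⊕ Fin n → K :=
  Sum.elim (fun i => s * ((i : ℕ) + 1)) fun i => -(s * ((i : ℕ) + 1))

theorem Amat_eq_diagonal (K : Type*) [Field K] (n : ℕ) (s : K) :
    Amat K n s = diagonal (Adiag K n s) := by
  rw [Amat, Dmat, ← diagonal_smul, diagonal_neg, fromBlocks_diagonal]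
  rfl

theorem Adiag_injective (K : Type*) [Field K] [CharZero K] (n : ℕ) {s : K} (hs : s ≠ 0) :
    Function.Injective (Adiag K n s) := by
  have hsucc : Function.Injective fun i : Fin n => s * ((i : ℕ) + 1 : K) := fun i j h => by
    simpa [hs, Fin.val_inj] using h
  refine hsucc.sumElim (neg_injective.comp hsucc) fun i j h => ?_
  have : s * (((i : ℕ) + (j : ℕ) + 2 : ℕ) : K) = 0 := by push_cast; linear_combination h
  rw [mul_eq_zero, Nat.cast_eq_zero] at this
  exact this.elim hs (by omega)

theorem sympForm_single_Cmat_mulVec_single (K : Type*) [Field K] (n : ℕ) (y : K)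
    (j : Fin n ⊕ Fin n) :
    sympForm K n (Pi.single j 1) (Cmat K n y *ᵥ Pi.single j 1) =
      Sum.elim (fun _ => -y) (fun _ => 1) j := by
  rw [sympForm, mulVec_mulVec, single_one_dotProduct, mulVec_single_one, col_apply, Jmat, Cmat,
    fromBlocks_multiply]
  rcases j with i | i <;> simp

theorem stmt7_general (K : Type*) [Field K] [CharZero K] (n : ℕ)
    (s y : K) (hs : s ≠ 0) (hy : y ≠ 0)
    (V : Submodule K (Fin n ⊕ Fin n → K))
    (hA : ∀ v ∈ V, (Amat K n s).mulVec v ∈ V)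
    (hC : ∀ v ∈ V, (Cmat K n y).mulVec v ∈ V)
    (hiso : ∀ v ∈ V, ∀ w ∈ V, sympForm K n v w = 0) :
    V = ⊥ := by
  by_contra hV
  obtain ⟨v, hv, hv0⟩ := Submodule.exists_mem_ne_zero_of_ne_bot hV
  obtain ⟨j, hj⟩ := Function.ne_iff.mp hv0
  rw [Amat_eq_diagonal] at hA
  have hej : Pi.single j 1 ∈ V :=
    single_mem_of_diagonal_mulVec_mem (Adiag_injective K n hs) hA hv hj
  have hB := hiso _ hej _ (hC _ hej)
  rw [sympForm_single_Cmat_mulVec_single] at hB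
  rcases j with i | i
  · exact hy (neg_eq_zero.mp hB)
  · exact one_ne_zero hB

/-- every subspace of `K^{2n}` invariant under both `A` and `C`
and totally isotropic for the symplectic form is zero. -/
theorem stmt7 (K : Type*) [Field K] [CharZero K] (n : ℕ) (hn : 1 ≤ n)
    (s y : K) (hs : s ≠ 0) (hy : y ≠ 0)
    (V : Submodule K (Fin n ⊕ Fin n → K))
    (hA : ∀ v ∈ V, (Amat K n s).mulVec v ∈ V)
    (hC : ∀ v ∈ V, (Cmat K n y).mulVec v ∈ V)
    (hiso : ∀ v ∈ V, ∀ w ∈ V, sympForm K n v w = 0) :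
    V = ⊥ :=
  stmt7_general K n s y hs hy V hA hC hiso
end
end

section
/- Let K have characteristic zero, equip K^{2n} with the symmetric bilinear form given by S = [[0,I_n],[I_n,0]]. Define x_1 = [[√x·D, 0],[0, -√x·D]] with D = diag(1,...,n), and x_2 = [[√x·A, y·Z],[y²·Z, -√x·A]] where A = (a_{ij}) with a_{ij} = 1 if i=1 or j=1 and 0 otherwise, and Z = (z_{ij}) with z_{1j} = 1 for j≠1, z_{i1} = -1 for i≠1, z_{ij} = 0 otherwise. Then for every standard basis vector e_i of K^{2n} (each being an eigenvector of x_1), one has B(x_2(e_i), x_2(e_i)) ≠ 0, where B(v,w) = vᵀSw (assuming x, y nonzero). -/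
/-!
`x₂ e_i` is the `i`-th column of `x₂`, and `B(v, v) = 2 ∑ⱼ vⱼ v_{n+j}` pairs the upper and lower
halves of a column. For the columns of `x₂` this gives `2 s y² c_k` and `-2 s y c_k`, where
`c_k = ∑ⱼ a_{jk} z_{jk}` equals `1 - n` for `k = 1` and `1` otherwise; in characteristic zero
with `n ≥ 2` every factor is nonzero.
-/

open Matrix

noncomputable section

/-- The standard hyperbolic symmetric form matrix `S = [[0, I_n],[I_n, 0]]`. -/
def Smat (K : Type*) [Field K] (n : ℕ) : Matrix (Fin n ⊕ Fin n) (Fin n ⊕ Fin n) K :=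
  fromBlocks 0 1 1 0

/-- The symmetric form `B(v, w) = vᵀ S w` on `K^{2n}`. -/
def symForm (K : Type*) [Field K] (n : ℕ) (v w : Fin n ⊕ Fin n → K) : K :=
  v ⬝ᵥ (Smat K n).mulVec w

/-- `D = diag(1, 2, …, n)`. -/
def Dmat' (K : Type*) [Field K] (n : ℕ) : Matrix (Fin n) (Fin n) K :=
  diagonal fun i => ((i : ℕ) + 1 : K)

/-- The matrix `A` with `a_{ij} = 1` if `i = 1` or `j = 1`, and `0` otherwise. -/
def Aso (K : Type*) [Field K] (n : ℕ) : Matrix (Fin n) (Fin n) K :=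
  Matrix.of fun i j => if (i : ℕ) = 0 ∨ (j : ℕ) = 0 then (1 : K) else 0

/-- The matrix `Z` with `z_{1j} = 1` for `j ≠ 1`, `z_{i1} = -1` for `i ≠ 1`,
and `0` otherwise. -/
def Zso (K : Type*) [Field K] (n : ℕ) : Matrix (Fin n) (Fin n) K :=
  Matrix.of fun i j =>
    if (i : ℕ) = 0 ∧ (j : ℕ) ≠ 0 then (1 : K) else if (j : ℕ) = 0 ∧ (i : ℕ) ≠ 0 then -1 else 0

/-- `x₁ = [[√x·D, 0], [0, -√x·D]]`. -/
def xOne (K : Type*) [Field K] (n : ℕ) (s : K) :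
    Matrix (Fin n ⊕ Fin n) (Fin n ⊕ Fin n) K :=
  fromBlocks (s • Dmat' K n) 0 0 (-(s • Dmat' K n))

/-- `x₂ = [[√x·A, y·Z], [y²·Z, -√x·A]]`. -/
def xTwo (K : Type*) [Field K] (n : ℕ) (s y : K) :
    Matrix (Fin n ⊕ Fin n) (Fin n ⊕ Fin n) K :=
  fromBlocks (s • Aso K n) (y • Zso K n) ((y ^ 2) • Zso K n) (-(s • Aso K n))

section

variable {K : Type*} [Field K] {n : ℕ}

theorem symForm_self (v : Fin n ⊕ Fin n → K) :
    symForm K n v v = 2 * ∑ j, v (Sum.inl j) * v (Sum.inr j) := by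
  simp [symForm, Smat, fromBlocks_mulVec, dotProduct, Fintype.sum_sum_type, two_mul, mul_comm]

theorem symForm_fromBlocks_col_inl (P Q R T : Matrix (Fin n) (Fin n) K) (k : Fin n) :
    symForm K n ((fromBlocks P Q R T).col (Sum.inl k)) ((fromBlocks P Q R T).col (Sum.inl k)) =
      2 * ∑ j, P j k * R j k := by
  simp [symForm_self]

theorem symForm_fromBlocks_col_inr (P Q R T : Matrix (Fin n) (Fin n) K) (k : Fin n) :
    symForm K n ((fromBlocks P Q R T).col (Sum.inr k)) ((fromBlocks P Q R T).col (Sum.inr k)) =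
      2 * ∑ j, Q j k * T j k := by
  simp [symForm_self]

theorem symForm_xTwo_col_inl (s y : K) (k : Fin n) :
    symForm K n ((xTwo K n s y).col (Sum.inl k)) ((xTwo K n s y).col (Sum.inl k)) =
      2 * s * y ^ 2 * ∑ j, Aso K n j k * Zso K n j k := by
  simp only [xTwo, symForm_fromBlocks_col_inl, Matrix.smul_apply, Finset.mul_sum]
  exact Finset.sum_congr rfl fun j _ => by ring

theorem symForm_xTwo_col_inr (s y : K) (k : Fin n) :
    symForm K n ((xTwo K n s y).col (Sum.inr k)) ((xTwo K n s y).col (Sum.inr k)) =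
      -(2 * s * y) * ∑ j, Aso K n j k * Zso K n j k := by
  simp only [xTwo, symForm_fromBlocks_col_inr, Matrix.smul_apply, Matrix.neg_apply,
    Finset.mul_sum]
  exact Finset.sum_congr rfl fun j _ => by ring

theorem sum_Aso_mul_Zso (k : Fin n) :
    ∑ j, Aso K n j k * Zso K n j k = if (k : ℕ) = 0 then 1 - (n : K) else 1 := by
  cases n with
  | zero => exact k.elim0
  | succ m =>
    rw [Fin.sum_univ_succ]
    obtain rfl | hk := eq_or_ne k 0
    · simp [Aso, Zso]
    · simp [Aso, Zso, hk, Fin.val_eq_zero_iff]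

theorem sum_Aso_mul_Zso_ne_zero [CharZero K] (hn : 2 ≤ n) (k : Fin n) :
    ∑ j, Aso K n j k * Zso K n j k ≠ 0 := by
  rw [sum_Aso_mul_Zso]
  split_ifs
  · rw [sub_ne_zero]
    exact_mod_cast (by omega : 1 ≠ n)
  · exact one_ne_zero

end

/-- for every standard basis vector `e_i` of `K^{2n}` (each an
eigenvector of `x₁`), `B(x₂ e_i, x₂ e_i) ≠ 0`. -/
theorem stmt11 (K : Type*) [Field K] [CharZero K] (n : ℕ) (hn : 2 ≤ n)
    (s y : K) (hs : s ≠ 0) (hy : y ≠ 0) (i : Fin n ⊕ Fin n) :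
    symForm K n ((xTwo K n s y).mulVec (Pi.single i 1))
      ((xTwo K n s y).mulVec (Pi.single i 1)) ≠ 0 := by
  rw [mulVec_single_one]
  rcases i with k | k
  · rw [symForm_xTwo_col_inl]
    simp [hs, hy, sum_Aso_mul_Zso_ne_zero hn k]
  · rw [symForm_xTwo_col_inr]
    simp [hs, hy, sum_Aso_mul_Zso_ne_zero hn k]
end
end

section
/- The matrix C = [[0,I_n],[y·I_n,0]] is an orthogonal similitude for the symmetric form S = [[0,I_n],[I_n,0]]: CᵀSC = y·S. Moreover, conjugation by C sends x_1 to -x_1 and x_2 to x_2^σ, where σ is the field automorphism sending √x to -√x and fixing y (i.e., C x_i C^{-1} = x_i^σ for i = 1,2). -/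
open Matrix

noncomputable section

/-- `C = [[0, I_n],[y·I_n, 0]]`. -/
def Cso (K : Type*) [Field K] (n : ℕ) (y : K) :
    Matrix (Fin n ⊕ Fin n) (Fin n ⊕ Fin n) K :=
  fromBlocks 0 1 (y • 1) 0

/-- `C⁻¹ = [[0, y⁻¹·I_n],[I_n, 0]]`. -/
def CsoInv (K : Type*) [Field K] (n : ℕ) (y : K) :
    Matrix (Fin n ⊕ Fin n) (Fin n ⊕ Fin n) K :=
  fromBlocks 0 (y⁻¹ • 1) 1 0

lemma mapD (K : Type*) [Field K] (n : ℕ) (σ : K ≃+* K) :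
    (Dmat' K n).map σ = Dmat' K n := by
  ext i j
  simp [Dmat', Matrix.map_apply, Matrix.diagonal_apply, apply_ite σ]

lemma mapA (K : Type*) [Field K] (n : ℕ) (σ : K ≃+* K) :
    (Aso K n).map σ = Aso K n := by
  ext i j
  simp [Aso, Matrix.map_apply, apply_ite σ]

lemma mapZ (K : Type*) [Field K] (n : ℕ) (σ : K ≃+* K) :
    (Zso K n).map σ = Zso K n := by
  ext i j
  simp [Zso, Matrix.map_apply, apply_ite σ]

lemma mapNeg (K : Type*) [Field K] {m : Type*} (σ : K ≃+* K)
    (M : Matrix m m K) : (-M).map σ = -(M.map σ) := by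
  ext i j; simp [Matrix.map_apply]

lemma mapSmul (K : Type*) [Field K] {m : Type*} (σ : K ≃+* K) (c : K)
    (M : Matrix m m K) : (c • M).map σ = σ c • M.map σ := by
  ext i j
  simp [Matrix.map_apply, mul_comm]

/-- `C` is an orthogonal similitude (`CᵀSC = y·S`), and
conjugation by `C` sends `x₁` to `-x₁ = x₁^σ` and `x₂` to `x₂^σ`, where `σ` is
the field automorphism with `σ(√x) = -√x` and `σ(y) = y`. -/
theorem stmt14 (K : Type*) [Field K] (n : ℕ) (s y : K) (hy : y ≠ 0)
    (σ : K ≃+* K) (hσs : σ s = -s) (hσy : σ y = y) :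
    (Cso K n y)ᵀ * Smat K n * Cso K n y = y • Smat K n ∧
    Cso K n y * CsoInv K n y = 1 ∧ CsoInv K n y * Cso K n y = 1 ∧
    Cso K n y * xOne K n s * CsoInv K n y = -xOne K n s ∧
    Cso K n y * xOne K n s * CsoInv K n y = (xOne K n s).map σ ∧
    Cso K n y * xTwo K n s y * CsoInv K n y = (xTwo K n s y).map σ := by
  have hinv : y * y⁻¹ = 1 := mul_inv_cancel₀ hy
  have hinv' : y⁻¹ * y = 1 := inv_mul_cancel₀ hy
  refine ⟨?_, ?_, ?_, ?_, ?_, ?_⟩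
  · simp [Cso, Smat, fromBlocks_transpose, fromBlocks_multiply, fromBlocks_smul,
      Matrix.smul_mul, Matrix.mul_smul]
  · simp [Cso, CsoInv, fromBlocks_multiply, Matrix.smul_mul, Matrix.mul_smul,
      smul_smul, hinv, hinv, hinv', fromBlocks_one]
  · simp [Cso, CsoInv, fromBlocks_multiply, Matrix.smul_mul, Matrix.mul_smul,
      smul_smul, hinv, hinv', fromBlocks_one]
  · simp [Cso, CsoInv, xOne, fromBlocks_multiply, fromBlocks_neg,
      Matrix.smul_mul, Matrix.mul_smul, smul_smul, hinv, hinv', mul_comm, mul_assoc, mul_left_comm]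
  · rw [xOne, Matrix.fromBlocks_map, mapSmul, mapNeg K σ, mapSmul, mapD, hσs,
      Matrix.map_zero _ (map_zero σ)]
    simp [Cso, CsoInv, xOne, fromBlocks_multiply, fromBlocks_neg,
      Matrix.smul_mul, Matrix.mul_smul, smul_smul, hinv, hinv', neg_smul, mul_comm, mul_assoc, mul_left_comm]
  · rw [xTwo, Matrix.fromBlocks_map, mapSmul, mapSmul, mapSmul, mapNeg K σ,
      mapSmul, mapA, mapZ, hσs, hσy, map_pow, hσy]
    simp [Cso, CsoInv, xTwo, fromBlocks_multiply, fromBlocks_neg,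
      Matrix.smul_mul, Matrix.mul_smul, smul_smul, hinv, hinv', neg_smul, pow_two,
      mul_left_comm, mul_comm]
    rw [mul_assoc, hinv, mul_one]
end
end

section
/- Let k be algebraically closed of characteristic zero, n ≥ 1. A point (x_1,...,x_g) ∈ M_n(k)^g is GIT-stable for the simultaneous conjugation action of PGL_n if and only if k^n is a simple module over the free algebra k<X_1,...,X_g> via X_i ↦ x_i. -/
/-!
A matrix `M` satisfies `M j l = 0` for all `j ∈ s`, `l ∉ s` exactly when the coordinate subspace
`{v | v = 0 on s}` is `M`-invariant. Hence a nonconstant weight `r` making every `Q * x i * P`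
block triangular yields, through the change of basis `P`, a proper nonzero subspace invariant
under all `x i`; conversely, any such subspace becomes a coordinate subspace after a change of
basis, and the indicator of the coordinates spanning it is a destabilising weight.
-/

open Matrix Module

section Coordinate

variable {R ι : Type*}

namespace Submodule

variable [Semiring R] [Nontrivial R]

theorem pi_bot_eq_bot_iff {s : Set ι} :
    pi s (fun _ ↦ (⊥ : Submodule R R)) = ⊥ ↔ s = Set.univ := by
  classical
  refine ⟨fun h ↦ Set.eq_univ_of_forall fun j ↦ ?_, fun h ↦ h ▸ pi_univ_bot⟩
  by_contra hj
  have hsingle : Pi.single j 1 ∈ pi s (fun _ ↦ (⊥ : Submodule R R)) := fun m hm ↦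
    (mem_bot R).mpr (Pi.single_eq_of_ne (by rintro rfl; exact hj hm) 1)
  rw [h, mem_bot] at hsingle
  exact one_ne_zero (Pi.single_eq_zero_iff.mp hsingle)

theorem pi_bot_eq_top_iff {s : Set ι} :
    pi s (fun _ ↦ (⊥ : Submodule R R)) = ⊤ ↔ s = ∅ := by
  classical
  refine ⟨fun h ↦ Set.eq_empty_of_forall_notMem fun j hj ↦ ?_, fun h ↦ h ▸ pi_empty _⟩
  have hsingle : Pi.single j 1 ∈ pi s (fun _ ↦ (⊥ : Submodule R R)) := h ▸ mem_top
  have hj1 := (mem_bot R).mp (hsingle j hj)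
  rw [Pi.single_eq_same] at hj1
  exact one_ne_zero hj1

end Submodule

namespace Matrix

variable [CommSemiring R] [Fintype ι] [DecidableEq ι]

theorem mem_invtSubmodule_toLin' {M : Matrix ι ι R} {W : Submodule R (ι → R)} :
    W ∈ End.invtSubmodule (toLin' M) ↔ ∀ v ∈ W, M *ᵥ v ∈ W := by
  simp [End.mem_invtSubmodule_iff_forall_mem_of_mem]

theorem pi_bot_mem_invtSubmodule_toLin'_iff {M : Matrix ι ι R} {s : Set ι} :
    Submodule.pi s (fun _ ↦ ⊥) ∈ End.invtSubmodule (toLin' M) ↔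
      ∀ j ∈ s, ∀ l ∉ s, M j l = 0 := by
  simp only [mem_invtSubmodule_toLin', Submodule.mem_pi, Submodule.mem_bot]
  constructor
  · intro h j hj l hl
    have hsingle : ∀ m ∈ s, (Pi.single l 1 : ι → R) m = 0 := fun m hm ↦
      Pi.single_eq_of_ne (by rintro rfl; exact hl hm) 1
    simpa [mulVec_single_one] using h _ hsingle j hj
  · intro h v hv j hj
    refine Finset.sum_eq_zero fun l _ ↦ ?_
    by_cases hl : l ∈ s
    · simp [hv l hl]
    · simp [h j hj l hl]

theorem toLin'_mul_mul_eq_conj {P Q : Matrix ι ι R} {e : (ι → R) ≃ₗ[R] (ι → R)}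
    (hQ : toLin' Q = e) (hP : toLin' P = e.symm) (A : Matrix ι ι R) :
    toLin' (Q * A * P) = e.conj (toLin' A) := by
  rw [toLin'_mul, toLin'_mul, hQ, hP, LinearEquiv.conj_apply]

end Matrix

end Coordinate

section AdaptedBasis

variable {K ι V : Type*} [Field K] [AddCommGroup V] [Module K V]

theorem Module.Basis.exists_reindex_span_image_eq (b₀ : Basis ι K V) (W : Submodule K V) :
    ∃ (b : Basis ι K V) (s : Set ι), Submodule.span K (b '' s) = W := by
  obtain ⟨t, -, hspan, hli⟩ := exists_linearIndependent K (W : Set V)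
  let B := Basis.extend hli.linearIndepOn_id
  let σ := B.indexEquiv b₀
  refine ⟨B.reindex σ, σ '' {x | x.1 ∈ t}, ?_⟩
  have hB : B.reindex σ '' (σ '' {x | x.1 ∈ t}) = t := by
    rw [Set.image_image]
    simp only [Basis.reindex_apply, Equiv.symm_apply_apply, B, Basis.coe_extend]
    exact (Subtype.image_preimage_coe _ t).trans
      (Set.inter_eq_right.mpr (by simpa using Basis.subset_extend hli.linearIndepOn_id))
  rw [hB, hspan, Submodule.span_eq]

variable [Finite ι]

theorem Module.Basis.map_equivFun_span_image (b : Basis ι K V) (s : Set ι) :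
    (Submodule.span K (b '' s)).map (b.equivFun : V →ₗ[K] ι → K) =
      Submodule.pi sᶜ (fun _ ↦ ⊥) := by
  ext v
  rw [Submodule.map_equiv_eq_comap_symm, Submodule.mem_comap, b.mem_span_image,
    Finsupp.support_subset_iff]
  simp only [← b.equivFun_apply, LinearEquiv.coe_coe, LinearEquiv.apply_symm_apply,
    Submodule.mem_pi, Submodule.mem_bot, Set.mem_compl_iff]

theorem Submodule.exists_linearEquiv_map_eq_pi_bot (b₀ : Basis ι K V) (W : Submodule K V) :
    ∃ (e : V ≃ₗ[K] (ι → K)) (s : Set ι), W.map (e : V →ₗ[K] ι → K) = pi s (fun _ ↦ ⊥) := by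
  obtain ⟨b, s, rfl⟩ := b₀.exists_reindex_span_image_eq W
  exact ⟨b.equivFun, sᶜ, b.map_equivFun_span_image s⟩

end AdaptedBasis

section Stability

variable {K ι κ : Type*} [Field K] [Fintype ι] [DecidableEq ι] {x : κ → Matrix ι ι K}

theorem exists_invtSubmodule_of_conj_blockTriangular {α : Type*} [LinearOrder α]
    {P Q : Matrix ι ι K} {r : ι → α} (hPQ : P * Q = 1) (hQP : Q * P = 1)
    (hr : ∃ j l, r j ≠ r l) (htri : ∀ i j l, r j < r l → (Q * x i * P) j l = 0) :
    ∃ W : Submodule K (ι → K), (∀ i, W ∈ End.invtSubmodule (toLin' (x i))) ∧ W ≠ ⊥ ∧ W ≠ ⊤ := by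
  obtain ⟨j, l, hlt⟩ : ∃ j l, r j < r l := by
    obtain ⟨j, l, hjl⟩ := hr
    rcases hjl.lt_or_gt with hlt | hlt
    exacts [⟨j, l, hlt⟩, ⟨l, j, hlt⟩]
  let e : (ι → K) ≃ₗ[K] (ι → K) := LinearEquiv.ofLinearMap (toLin' Q) (toLin' P)
    (by rw [← toLin'_mul, hQP, toLin'_one]) (by rw [← toLin'_mul, hPQ, toLin'_one])
  let S := Submodule.pi {m | r m < r l} fun _ ↦ (⊥ : Submodule K K)
  refine ⟨S.map (e.symm : (ι → K) →ₗ[K] ι → K), fun i ↦ ?_, ?_, ?_⟩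
  · rw [LinearEquiv.map_mem_invtSubmodule_iff, LinearEquiv.symm_symm,
      ← toLin'_mul_mul_eq_conj rfl rfl, pi_bot_mem_invtSubmodule_toLin'_iff]
    exact fun j' hj' l' hl' ↦ htri i j' l' (hj'.trans_le (not_lt.mp hl'))
  · rw [Submodule.map_ne_bot_iff, Ne, Submodule.pi_bot_eq_bot_iff]
    exact fun h ↦ lt_irrefl (r l) (Set.eq_univ_iff_forall.mp h l)
  · rw [Submodule.map_ne_top_iff, Ne, Submodule.pi_bot_eq_top_iff]
    exact Set.nonempty_iff_ne_empty.mp ⟨j, hlt⟩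

theorem exists_conj_blockTriangular_of_invtSubmodule {W : Submodule K (ι → K)}
    (hW : ∀ i, W ∈ End.invtSubmodule (toLin' (x i))) (hbot : W ≠ ⊥) (htop : W ≠ ⊤) :
    ∃ (P Q : Matrix ι ι K) (r : ι → ℤ), P * Q = 1 ∧ Q * P = 1 ∧ (∃ j l, r j ≠ r l) ∧
      ∀ i j l, r j < r l → (Q * x i * P) j l = 0 := by
  classical
  obtain ⟨e, s, hs⟩ := Submodule.exists_linearEquiv_map_eq_pi_bot (Pi.basisFun K ι) W
  have hs_ne_empty : s ≠ ∅ := by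
    rwa [Ne, ← Submodule.pi_bot_eq_top_iff (R := K), ← hs, Submodule.map_eq_top_iff]
  have hs_ne_univ : s ≠ Set.univ := by
    rwa [Ne, ← Submodule.pi_bot_eq_bot_iff (R := K), ← hs, Submodule.map_eq_bot_iff]
  obtain ⟨j, hj⟩ := Set.nonempty_iff_ne_empty.mpr hs_ne_empty
  obtain ⟨l, hl⟩ := (Set.ne_univ_iff_exists_notMem s).mp hs_ne_univ
  refine ⟨LinearMap.toMatrix' e.symm, LinearMap.toMatrix' e, fun m ↦ if m ∈ s then 0 else 1,
    ?_, ?_, ⟨j, l, by simp [hj, hl]⟩, fun i j' l' hlt ↦ ?_⟩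
  · rw [← LinearMap.toMatrix'_comp, LinearEquiv.comp_coe, e.self_trans_symm]
    exact LinearMap.toMatrix'_id
  · rw [← LinearMap.toMatrix'_comp, LinearEquiv.comp_coe, e.symm_trans_self]
    exact LinearMap.toMatrix'_id
  · have hinv := e.map_mem_invtSubmodule_conj_iff.mpr (hW i)
    rw [hs, ← toLin'_mul_mul_eq_conj (toLin'_toMatrix' _) (toLin'_toMatrix' _),
      pi_bot_mem_invtSubmodule_toLin'_iff] at hinv
    obtain ⟨hj', hl'⟩ : j' ∈ s ∧ l' ∉ s := by
      simp only at hlt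
      split_ifs at hlt <;> first | omega | exact ⟨‹_›, ‹_›⟩
    exact hinv j' hj' l' hl'

end Stability

theorem stmt17_general (k : Type*) [Field k] (n g : ℕ)
    (x : Fin g → Matrix (Fin n) (Fin n) k) :
    (¬ ∃ (P Q : Matrix (Fin n) (Fin n) k) (r : Fin n → ℤ),
        P * Q = 1 ∧ Q * P = 1 ∧ (∃ j l : Fin n, r j ≠ r l) ∧
        ∀ (i : Fin g) (j l : Fin n), r j < r l → (Q * x i * P) j l = 0) ↔
    (∀ W : Submodule k (Fin n → k),
        (∀ i, ∀ v ∈ W, (x i).mulVec v ∈ W) → W = ⊥ ∨ W = ⊤) := by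
  simp_rw [← mem_invtSubmodule_toLin']
  rw [← not_iff_not, not_not]
  push Not
  exact ⟨fun ⟨_, _, _, hPQ, hQP, hr, htri⟩ ↦
      exists_invtSubmodule_of_conj_blockTriangular hPQ hQP hr htri,
    fun ⟨_, hW, hbot, htop⟩ ↦ exists_conj_blockTriangular_of_invtSubmodule hW hbot htop⟩

/-- a point `(x_1, …, x_g) ∈ M_n(k)^g` (k algebraically closed of
characteristic zero, `n ≥ 1`) is GIT-stable for the simultaneous conjugation
action of `PGL_n` — by Hilbert–Mumford, no conjugate of the tuple is
simultaneously block upper triangular with respect to a nonconstant integer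
weight vector — if and only if `k^n` is a simple module over the free algebra
`k⟨X_1, …, X_g⟩` acting via `X_i ↦ x_i`. -/
theorem stmt17 (k : Type*) [Field k] [CharZero k] [IsAlgClosed k] (n g : ℕ)
    (hn : 1 ≤ n) (x : Fin g → Matrix (Fin n) (Fin n) k) :
    (¬ ∃ (P Q : Matrix (Fin n) (Fin n) k) (r : Fin n → ℤ),
        P * Q = 1 ∧ Q * P = 1 ∧ (∃ j l : Fin n, r j ≠ r l) ∧
        ∀ (i : Fin g) (j l : Fin n), r j < r l → (Q * x i * P) j l = 0) ↔
    (∀ W : Submodule k (Fin n → k),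
        (∀ i, ∀ v ∈ W, (x i).mulVec v ∈ W) → W = ⊥ ∨ W = ⊤) :=
  stmt17_general k n g x
end

section
/- Let B be a nondegenerate alternating bilinear form on a finite-dimensional vector space V over a field k. Every totally isotropic subspace U ⊆ V is contained in a maximal totally isotropic subspace of dimension dim(V)/2, and any two maximal totally isotropic subspaces are conjugate under the symplectic group Sp(V,B). -/
/-!
A maximal totally isotropic subspace `M` satisfies `M = M^⊥`, so it has dimension `dim V / 2`;
well-foundedness of the lattice of subspaces puts one above any totally isotropic `U`.
For conjugacy, split off hyperbolic planes spanned by `u ∈ M` and `v` with `B u v = 1`: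
this builds a Darboux basis `(eᵢ, fᵢ)` with the `eᵢ` spanning `M`, and the linear map sending
one Darboux basis to another is an isometry carrying one Lagrangian onto the other.
-/

open Module Submodule LinearMap.BilinForm

namespace LinearMap.BilinForm

variable {k V V' ι : Type*} [Field k] [AddCommGroup V] [Module k V] [AddCommGroup V'] [Module k V']
  {B : LinearMap.BilinForm k V} {B' : LinearMap.BilinForm k V'}

lemma mem_orthogonal_span_iff {s : Set V} {x : V} :
    x ∈ B.orthogonal (span k s) ↔ ∀ y ∈ s, B y x = 0 := by
  change span k s ≤ LinearMap.ker (B.flip x) ↔ _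
  rw [span_le]
  rfl

lemma sup_span_singleton_le_orthogonal (hBa : B.IsAlt) {U : Submodule k V}
    (hU : U ≤ B.orthogonal U) {v : V} (hv : v ∈ B.orthogonal U) :
    U ⊔ k ∙ v ≤ B.orthogonal (U ⊔ k ∙ v) := by
  intro x hx y hy
  obtain ⟨u, hu, _, hau, rfl⟩ := mem_sup.1 hx
  obtain ⟨a, rfl⟩ := mem_span_singleton.1 hau
  obtain ⟨u', hu', _, hbu, rfl⟩ := mem_sup.1 hy
  obtain ⟨b, rfl⟩ := mem_span_singleton.1 hbu
  simp [hU hu u' hu', hv u' hu', hBa.isRefl _ _ (hv u hu), hBa.self_eq_zero v]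

lemma exists_le_orthogonal_eq_self [FiniteDimensional k V] (hBa : B.IsAlt) {U : Submodule k V}
    (hU : U ≤ B.orthogonal U) : ∃ M, U ≤ M ∧ B.orthogonal M = M := by
  obtain ⟨M, ⟨hUM, hM⟩, hmax⟩ :=
    wellFounded_gt.has_min {M | U ≤ M ∧ M ≤ B.orthogonal M} ⟨U, le_rfl, hU⟩
  refine ⟨M, hUM, le_antisymm (fun v hv => ?_) hM⟩
  by_contra hvM
  exact hmax (M ⊔ k ∙ v) ⟨hUM.trans le_sup_left, sup_span_singleton_le_orthogonal hBa hM hv⟩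
    (left_lt_sup.2 (by rwa [span_singleton_le_iff_mem]))

lemma two_mul_finrank_eq_of_orthogonal_eq_self [FiniteDimensional k V] (hB : B.Nondegenerate)
    {M : Submodule k V} (hM : B.orthogonal M = M) : 2 * finrank k M = finrank k V := by
  have := finrank_orthogonal hB M
  rw [hM] at this
  have := M.finrank_le
  omega

lemma exists_apply_eq_one (hB : B.Nondegenerate) {u : V} (hu : u ≠ 0) : ∃ v, B u v = 1 := by
  obtain ⟨w, hw⟩ : ∃ w, B u w ≠ 0 := by
    by_contra! h
    exact hu (hB.1 u h)
  exact ⟨(B u w)⁻¹ • w, by rw [map_smul, smul_eq_mul, inv_mul_cancel₀ hw]⟩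

section HyperbolicPair

variable {u v : V}

lemma apply_eq_neg_one_of_apply_eq_one (hBa : B.IsAlt) (huv : B u v = 1) : B v u = -1 := by
  rw [← hBa.neg_eq, huv]

lemma linearIndependent_pair_of_apply_eq_one (hBa : B.IsAlt) (huv : B u v = 1) :
    LinearIndependent k ![u, v] := by
  refine LinearIndependent.pair_iff.2 fun a b hab => ⟨?_, ?_⟩
  · simpa [apply_eq_neg_one_of_apply_eq_one hBa huv, hBa.self_eq_zero v] using congrArg (B v) hab
  · simpa [huv, hBa.self_eq_zero u] using congrArg (B u) hab

lemma finrank_span_pair_of_apply_eq_one (hBa : B.IsAlt) (huv : B u v = 1) :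
    finrank k (span k {u, v}) = 2 := by
  have := finrank_span_eq_card (linearIndependent_pair_of_apply_eq_one hBa huv)
  rwa [Matrix.range_cons_cons_empty, Fintype.card_fin] at this

lemma nondegenerate_restrict_span_pair (hBa : B.IsAlt) (huv : B u v = 1) :
    (B.restrict (span k {u, v})).Nondegenerate := by
  refine B.nondegenerate_restrict_of_disjoint_orthogonal hBa.isRefl
    (disjoint_def.2 fun x hx hxo => ?_)
  obtain ⟨a, b, rfl⟩ := mem_span_pair.1 hx
  rw [mem_orthogonal_span_iff] at hxo
  have ha := hxo v (by simp)
  have hb := hxo u (by simp)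
  simp [huv, apply_eq_neg_one_of_apply_eq_one hBa huv, hBa.self_eq_zero u,
    hBa.self_eq_zero v] at ha hb
  simp [ha, hb]

lemma le_span_singleton_sup_inf_orthogonal_span_pair (hBa : B.IsAlt) (huv : B u v = 1)
    {M : Submodule k V} (hM : M ≤ B.orthogonal M) (huM : u ∈ M) :
    M ≤ k ∙ u ⊔ M ⊓ B.orthogonal (span k {u, v}) := by
  intro m hm
  have hm' : m + B v m • u ∈ M ⊓ B.orthogonal (span k {u, v}) := by
    refine ⟨M.add_mem hm (M.smul_mem _ huM), mem_orthogonal_span_iff.2 ?_⟩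
    simp [hM hm u huM, hBa.self_eq_zero u, apply_eq_neg_one_of_apply_eq_one hBa huv]
  exact mem_sup.2 ⟨-B v m • u, smul_mem _ _ (mem_span_singleton_self u), _, hm', by module⟩

end HyperbolicPair

lemma nondegenerate_restrict_orthogonal [FiniteDimensional k V] (hB : B.Nondegenerate)
    (hBr : B.IsRefl) {W : Submodule k V} (hW : (B.restrict W).Nondegenerate) :
    (B.restrict (B.orthogonal W)).Nondegenerate := by
  rw [restrict_nondegenerate_iff_isCompl_orthogonal hBr, orthogonal_orthogonal hB hBr]
  exact (isCompl_orthogonal_of_restrict_nondegenerate hBr hW).symm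

structure IsDarbouxFamily [DecidableEq ι] (B : LinearMap.BilinForm k V) (e f : ι → V) : Prop where
  left_left : ∀ i j, B (e i) (e j) = 0
  right_right : ∀ i j, B (f i) (f j) = 0
  left_right : ∀ i j, B (e i) (f j) = if i = j then 1 else 0

namespace IsDarbouxFamily

variable [DecidableEq ι] {e f : ι → V}

lemma linearIndependent [Fintype ι] (h : IsDarbouxFamily B e f) :
    LinearIndependent k (Sum.elim e f) := by
  refine Fintype.linearIndependent_iff.2 fun g hg => ?_
  rw [Fintype.sum_sum_type] at hg
  rintro (j | j)
  · simpa [h.left_right, h.right_right] using congrArg (B · (f j)) hg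
  · simpa [h.left_right, h.left_left] using congrArg (B (e j)) hg

lemma apply_sumElim_eq (hBa : B.IsAlt) (hBa' : B'.IsAlt) {e' f' : ι → V'}
    (h : IsDarbouxFamily B e f) (h' : IsDarbouxFamily B' e' f') (i j : ι ⊕ ι) :
    B' (Sum.elim e' f' i) (Sum.elim e' f' j) = B (Sum.elim e f i) (Sum.elim e f j) := by
  rcases i with i | i <;> rcases j with j | j
  · simp [h.left_left, h'.left_left]
  · simp [h.left_right, h'.left_right]
  · simp [← hBa.neg_eq (e j), ← hBa'.neg_eq (e' j), h.left_right, h'.left_right, eq_comm]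
  · simp [h.right_right, h'.right_right]

lemma exists_linearEquiv [Fintype ι] [FiniteDimensional k V] [FiniteDimensional k V']
    (hBa : B.IsAlt) (hBa' : B'.IsAlt) {e' f' : ι → V'}
    (h : IsDarbouxFamily B e f) (h' : IsDarbouxFamily B' e' f')
    (hV : finrank k V = 2 * Fintype.card ι) (hV' : finrank k V' = 2 * Fintype.card ι) :
    ∃ φ : V ≃ₗ[k] V', (∀ x y, B' (φ x) (φ y) = B x y) ∧ ∀ i, φ (e i) = e' i := by
  let b := basisOfLinearIndependentOfCardEqFinrank' _ h.linearIndependent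
    (by rw [Fintype.card_sum, hV]; ring)
  let b' := basisOfLinearIndependentOfCardEqFinrank' _ h'.linearIndependent
    (by rw [Fintype.card_sum, hV']; ring)
  let φ := b.equiv b' (Equiv.refl _)
  have hφ : ∀ i, φ (Sum.elim e f i) = Sum.elim e' f' i := fun i => by
    simpa [b, b'] using b.equiv_apply i b' (Equiv.refl _)
  refine ⟨φ, fun x y => ?_, fun i => hφ (.inl i)⟩
  suffices B'.compl₁₂ (φ : V →ₗ[k] V') (φ : V →ₗ[k] V') = B from congrArg (· x y) this
  refine ext_basis b fun i j => ?_
  simpa [b, hφ] using apply_sumElim_eq hBa hBa' h h' i j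

lemma span_range_left_eq [Fintype ι] [FiniteDimensional k V] (h : IsDarbouxFamily B e f)
    {M : Submodule k V} (heM : ∀ i, e i ∈ M) (hM : finrank k M = Fintype.card ι) :
    span k (Set.range e) = M := by
  refine eq_of_le_of_finrank_eq (span_le.2 (Set.range_subset_iff.2 heM)) ?_
  rw [hM]
  exact finrank_span_eq_card (h.linearIndependent.comp Sum.inl Sum.inl_injective :)

lemma cons {n : ℕ} (hBa : B.IsAlt) {u v : V} (huv : B u v = 1) {W : Submodule k V}
    (hW : W ≤ B.orthogonal (span k {u, v})) {e f : Fin n → W}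
    (h : IsDarbouxFamily (B.restrict W) e f) :
    IsDarbouxFamily B (Fin.cons u fun i => (e i : V)) (Fin.cons v fun i => (f i : V)) := by
  have hu (w : W) : B u w = 0 := mem_orthogonal_span_iff.1 (hW w.2) u (by simp)
  have hv (w : W) : B v w = 0 := mem_orthogonal_span_iff.1 (hW w.2) v (by simp)
  have hu' (w : W) : B w u = 0 := hBa.isRefl _ _ (hu w)
  have hv' (w : W) : B w v = 0 := hBa.isRefl _ _ (hv w)
  have hee (i j) : B (e i) (e j) = 0 := h.left_left i j
  have hff (i j) : B (f i) (f j) = 0 := h.right_right i j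
  have hef (i j) : B (e i) (f j) = if i = j then 1 else 0 := h.left_right i j
  refine ⟨fun i j => ?_, fun i j => ?_, fun i j => ?_⟩ <;>
    cases i using Fin.cases <;> cases j using Fin.cases <;>
    simp [hu, hv, hu', hv', huv, hBa.self_eq_zero u, hBa.self_eq_zero v, hee, hff, hef,
      Fin.succ_ne_zero, eq_comm (a := (0 : Fin (n + 1)))]

end IsDarbouxFamily

theorem exists_isDarbouxFamily [FiniteDimensional k V] (hB : B.Nondegenerate) (hBa : B.IsAlt)
    {M : Submodule k V} (hM : M ≤ B.orthogonal M) {n : ℕ} (hV : finrank k V = 2 * n)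
    (hMn : n ≤ finrank k M) : ∃ e f : Fin n → V, IsDarbouxFamily B e f ∧ ∀ i, e i ∈ M := by
  induction n generalizing V with
  | zero => exact ⟨Fin.elim0, Fin.elim0, ⟨nofun, nofun, nofun⟩, nofun⟩
  | succ n ih =>
    obtain ⟨u, huM, hu⟩ := exists_mem_ne_zero_of_ne_bot fun hM₀ : M = ⊥ => by
      subst hM₀
      simp at hMn
    obtain ⟨v, huv⟩ := exists_apply_eq_one hB hu
    set W := B.orthogonal (span k {u, v})
    have hWV : finrank k W = 2 * n := by
      rw [finrank_orthogonal hB, finrank_span_pair_of_apply_eq_one hBa huv]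
      omega
    have hMW : n ≤ finrank k (M.comap W.subtype) := by
      have hle : finrank k M ≤ finrank k ↥(k ∙ u ⊔ M ⊓ W) :=
        finrank_mono (le_span_singleton_sup_inf_orthogonal_span_pair hBa huv hM huM)
      have hsup := finrank_add_le_finrank_add_finrank (k ∙ u) (M ⊓ W)
      rw [finrank_span_singleton hu] at hsup
      rw [← finrank_map_subtype_eq, map_comap_subtype, inf_comm]
      omega
    have hWnd : (B.restrict W).Nondegenerate :=
      nondegenerate_restrict_orthogonal hB hBa.isRefl (nondegenerate_restrict_span_pair hBa huv)
    obtain ⟨e, f, h, heM⟩ := ih hWnd (fun x => hBa x) (fun x hx y hy => hM hx y hy) hWV hMW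
    exact ⟨_, _, h.cons hBa huv le_rfl, Fin.cases huM heM⟩

theorem exists_isometry_map_eq [FiniteDimensional k V] [FiniteDimensional k V']
    (hB : B.Nondegenerate) (hBa : B.IsAlt) (hB' : B'.Nondegenerate) (hBa' : B'.IsAlt)
    (hVV' : finrank k V = finrank k V') {M : Submodule k V} {M' : Submodule k V'}
    (hM : M ≤ B.orthogonal M) (hM' : M' ≤ B'.orthogonal M')
    (hMV : 2 * finrank k M = finrank k V) (hMV' : 2 * finrank k M' = finrank k V') :
    ∃ φ : V ≃ₗ[k] V', (∀ x y, B' (φ x) (φ y) = B x y) ∧ M.map (φ : V →ₗ[k] V') = M' := by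
  obtain ⟨e, f, h, heM⟩ := exists_isDarbouxFamily hB hBa hM hMV.symm le_rfl
  obtain ⟨e', f', h', heM'⟩ :=
    exists_isDarbouxFamily hB' hBa' hM' (n := finrank k M) (by omega) (by omega)
  obtain ⟨φ, hφB, hφe⟩ := h.exists_linearEquiv hBa hBa' h' (by simp; omega) (by simp; omega)
  refine ⟨φ, hφB, ?_⟩
  rw [← h.span_range_left_eq heM (by simp), ← h'.span_range_left_eq heM' (by simp; omega),
    map_span, ← Set.range_comp]
  simp [Function.comp_def, hφe]

end LinearMap.BilinForm

/-- Witt extension for alternating forms: for a nondegenerate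
alternating bilinear form `B` on a finite-dimensional space `V`, every totally
isotropic subspace is contained in a totally isotropic subspace of dimension
`dim V / 2` (necessarily maximal), and any two totally isotropic subspaces of
dimension `dim V / 2` are conjugate under the symplectic group `Sp(V, B)`. -/
theorem stmt18 (k V : Type*) [Field k] [AddCommGroup V] [Module k V]
    [FiniteDimensional k V]
    (B : LinearMap.BilinForm k V) (hB : B.Nondegenerate) (hBa : B.IsAlt) :
    (∀ U : Submodule k V, (∀ u ∈ U, ∀ u' ∈ U, B u u' = 0) →
      ∃ M : Submodule k V, U ≤ M ∧ (∀ u ∈ M, ∀ u' ∈ M, B u u' = 0) ∧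
        Module.finrank k M = Module.finrank k V / 2) ∧
    (∀ M₁ M₂ : Submodule k V,
      (∀ u ∈ M₁, ∀ u' ∈ M₁, B u u' = 0) →
      Module.finrank k M₁ = Module.finrank k V / 2 →
      (∀ u ∈ M₂, ∀ u' ∈ M₂, B u u' = 0) →
      Module.finrank k M₂ = Module.finrank k V / 2 →
      ∃ e : V ≃ₗ[k] V, (∀ v w, B (e v) (e w) = B v w) ∧
        M₁.map (e : V →ₗ[k] V) = M₂) := by
  have isotropic_iff (U : Submodule k V) :
      (∀ u ∈ U, ∀ u' ∈ U, B u u' = 0) ↔ U ≤ B.orthogonal U :=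
    ⟨fun h _ hu _ hu' => h _ hu' _ hu, fun h _ hu _ hu' => h hu' _ hu⟩
  -- a Lagrangian exists, so `finrank k V` is even and the `/ 2` below is exact
  obtain ⟨M₀, -, hM₀⟩ := exists_le_orthogonal_eq_self hBa (bot_le : ⊥ ≤ B.orthogonal ⊥)
  have hV := two_mul_finrank_eq_of_orthogonal_eq_self hB hM₀
  refine ⟨fun U hU => ?_, fun M₁ M₂ h₁ hd₁ h₂ hd₂ => ?_⟩
  · obtain ⟨M, hUM, hM⟩ := exists_le_orthogonal_eq_self hBa ((isotropic_iff U).1 hU)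
    have := two_mul_finrank_eq_of_orthogonal_eq_self hB hM
    exact ⟨M, hUM, (isotropic_iff M).2 hM.ge, by omega⟩
  · exact exists_isometry_map_eq hB hBa hB hBa rfl ((isotropic_iff M₁).1 h₁)
      ((isotropic_iff M₂).1 h₂) (by omega) (by omega)
end
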